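/- For every k ≥ 2 there is a constant c_k such that every n-vertex graph with no cycle of length 4 contains at most c_k · n^{k + 1/2} copies of the cycle C_{2k+1}. -/

import Mathlib

/-!
In a `C₄`-free graph two distinct vertices have at most one common neighbour. Hence a copy
`v₀ v₁ ⋯ v₂ₖ` of `C₂ₖ₊₁` is determined by the dart `(v₀, v₁)` and the odd vertices
`v₃, v₅, …, v₂ₖ₋₁`: every even vertex `v₂ⱼ` is the unique common neighbour of `v₂ⱼ₋₁` and
`v₂ⱼ₊₁` (indices mod `2k + 1`, so `v₂ₖ₊₁ = v₀`). So there are at most `2e · n^(k-1)` copies.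
Double counting cherries gives `∑ d(v)² ≤ 2n²`, and Cauchy–Schwarz then
`2e = ∑ d(v) ≤ √2 n^(3/2)`.
-/

open SimpleGraph

/-- Number of unlabeled copies of `H` in `G`, i.e. the number of subgraphs of `G`
whose coercion is isomorphic to `H`. -/
noncomputable def copyCount {α β : Type*} (H : SimpleGraph α) (G : SimpleGraph β) : ℕ :=
  Nat.card {G' : G.Subgraph // Nonempty (H ≃g G'.coe)}

/-- `G` contains no cycle of length `m`. -/
def CycleFree {V : Type*} (G : SimpleGraph V) (m : ℕ) : Prop :=
  ∀ ⦃v : V⦄ (w : G.Walk v v), w.IsCycle → w.length ≠ m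

/-- The number of `(U 0, …, U (k-1))`-cycles in `G`. -/
noncomputable def cCount {V : Type*} (G : SimpleGraph V) {k : ℕ} (U : Fin k → Set V) : ℕ :=
  Nat.card {u : Fin k → V // (∀ i, u i ∈ U i) ∧ ∀ i : Fin k, G.Adj (u i) (u ⟨(i.val + 1) % k, Nat.mod_lt _ i.pos⟩)}

/-- The number of `(U 0, …, U (k-1))`-paths in `G`. -/
noncomputable def pCount {V : Type*} (G : SimpleGraph V) {k : ℕ} (U : Fin k → Set V) : ℕ :=
  Nat.card {u : Fin k → V // (∀ i, u i ∈ U i) ∧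
    ∀ (i : ℕ) (h : i + 1 < k), G.Adj (u ⟨i, Nat.lt_of_succ_lt h⟩) (u ⟨i + 1, h⟩)}

/-- The number of edges of `G` between the disjoint sets `X` and `Y`. -/
noncomputable def eCount {V : Type*} (G : SimpleGraph V) (X Y : Set V) : ℕ :=
  Nat.card {p : V × V // p.1 ∈ X ∧ p.2 ∈ Y ∧ G.Adj p.1 p.2}

/-- The neighbourhood of `v` inside the set `Y`. -/
def nbhdIn {V : Type*} (G : SimpleGraph V) (v : V) (Y : Set V) : Set V :=
  {y ∈ Y | G.Adj v y}

/-- The independence number of a finite graph. -/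
noncomputable def indepNum {W : Type*} [Fintype W] (G : SimpleGraph W) : ℕ :=
  sSup {m | ∃ s : Finset W, (∀ a ∈ s, ∀ b ∈ s, ¬ G.Adj a b) ∧ s.card = m}

lemma Fin.sub_one_ne_add_one {m : ℕ} [NeZero m] (hm : 2 < m) (i : Fin m) : i - 1 ≠ i + 1 := by
  rw [Ne, sub_eq_iff_eq_add, add_assoc, left_eq_add, Fin.ext_iff, Fin.val_add, Fin.val_one',
    Nat.mod_eq_of_lt (by omega : 1 < m), Fin.val_zero, Nat.mod_eq_of_lt hm]
  omega

lemma SimpleGraph.cycleGraph_adj_add_one {m : ℕ} [NeZero m] (hm : 1 < m) (i : Fin m) :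
    (cycleGraph m).Adj i (i + 1) := by
  rw [cycleGraph_adj', add_sub_cancel_left, Fin.val_one', Nat.mod_eq_of_lt hm]
  simp

namespace CycleFree

variable {V : Type*} {G : SimpleGraph V}

lemma eq_of_adj_of_adj (h4 : CycleFree G 4) {x z a b : V} (hxz : x ≠ z)
    (hxa : G.Adj x a) (hza : G.Adj z a) (hxb : G.Adj x b) (hzb : G.Adj z b) : a = b := by
  by_contra hab
  refine h4 (.cons hxa (.cons hza.symm (.cons hzb (.cons hxb.symm .nil)))) ?_ rfl
  rw [Walk.cons_isCycle_iff]
  simp [Walk.cons_isPath_iff, hxz, hxz.symm, hab, hxa.ne', hza.ne', hxb.ne', hxa.ne, hzb.ne]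

end CycleFree

namespace SimpleGraph.Copy

variable {V : Type*} {G : SimpleGraph V}

lemma cycleGraph_apply_eq {m : ℕ} [NeZero m] (h4 : CycleFree G 4) (hm : 2 < m)
    {f g : Copy (cycleGraph m) G} {i : Fin m}
    (hprev : f (i - 1) = g (i - 1)) (hnext : f (i + 1) = g (i + 1)) : f i = g i := by
  have hadj (h : Copy (cycleGraph m) G) : G.Adj (h (i - 1)) (h i) ∧ G.Adj (h (i + 1)) (h i) :=
    ⟨h.toHom.map_adj (by simpa using cycleGraph_adj_add_one (m := m) (by omega) (i - 1)),
      h.toHom.map_adj (cycleGraph_adj_add_one (by omega) i).symm⟩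
  exact h4.eq_of_adj_of_adj (f.injective.ne (Fin.sub_one_ne_add_one hm i)) (hadj f).1 (hadj f).2
    (hprev ▸ (hadj g).1) (hnext ▸ (hadj g).2)

lemma cycleGraph_ext {m : ℕ} [NeZero m] (h4 : CycleFree G 4) (hm : 2 < m)
    {f g : Copy (cycleGraph m) G} (S : Set (Fin m)) (hS : ∀ i ∉ S, i - 1 ∈ S ∧ i + 1 ∈ S)
    (hfg : ∀ i ∈ S, f i = g i) : f = g := by
  refine DFunLike.ext _ _ fun i => ?_
  by_cases hi : i ∈ S
  · exact hfg i hi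
  · exact cycleGraph_apply_eq h4 hm (hfg _ (hS i hi).1) (hfg _ (hS i hi).2)

lemma oddCycleGraph_ext {k : ℕ} (h4 : CycleFree G 4) (hk : 1 ≤ k)
    {f g : Copy (cycleGraph (2 * k + 1)) G} (h0 : f 0 = g 0)
    (hodd : ∀ i : Fin (2 * k + 1), Odd i.val → f i = g i) : f = g := by
  refine cycleGraph_ext h4 (by omega) {i | i = 0 ∨ Odd i.val} (fun i hi => ?_) ?_
  · simp only [Set.mem_ofPred_eq, not_or, Nat.not_odd_iff_even] at hi ⊢
    obtain ⟨hi0, heven⟩ := hi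
    have hpos : i.val ≠ 0 := Fin.val_ne_zero_iff.mpr hi0
    refine ⟨Or.inr ?_, ?_⟩
    · rw [Fin.val_sub_one_of_ne_zero hi0]
      exact Nat.Even.sub_odd (by omega) heven odd_one
    · rw [Fin.val_add_one]
      split_ifs with hlast
      · exact Or.inl (by rw [hlast, Fin.last_add_one])
      · exact Or.inr heven.add_one
  · rintro i (rfl | hi)
    exacts [h0, hodd i hi]

end SimpleGraph.Copy

namespace CycleFree

variable {V : Type*} [Fintype V] {G : SimpleGraph V} [DecidableRel G.Adj]

lemma labelledCopyCount_oddCycleGraph_le {k : ℕ} (h4 : CycleFree G 4) (hk : 1 ≤ k) :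
    G.labelledCopyCount (cycleGraph (2 * k + 1)) ≤
      (∑ v, G.degree v) * Fintype.card V ^ (k - 1) := by
  let φ (f : Copy (cycleGraph (2 * k + 1)) G) : G.Dart × (Fin (k - 1) → V) :=
    (⟨(f 0, f 1), f.toHom.map_adj
      (by simpa using cycleGraph_adj_add_one (m := 2 * k + 1) (by omega) 0)⟩,
      fun j => f ⟨2 * j + 3, by omega⟩)
  have hφ : φ.Injective := by
    intro f g hfg
    simp only [φ, Prod.mk.injEq, Dart.ext_iff, funext_iff] at hfg
    obtain ⟨⟨h0, h1⟩, hrest⟩ := hfg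
    refine Copy.oddCycleGraph_ext h4 hk h0 fun i ⟨j, hj⟩ => ?_
    rcases j with _ | j
    · rwa [show i = 1 from Fin.ext (by rw [Fin.val_one', Nat.mod_eq_of_lt (by omega)]; omega)]
    · rw [show i = ⟨2 * j + 3, by omega⟩ from Fin.ext (by rw [hj]; ring)]
      exact hrest ⟨j, by omega⟩
  classical
  calc G.labelledCopyCount (cycleGraph (2 * k + 1))
      = Nat.card (Copy (cycleGraph (2 * k + 1)) G) := Fintype.card_eq_nat_card
    _ ≤ Nat.card (G.Dart × (Fin (k - 1) → V)) := Nat.card_le_card_of_injective φ hφ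
    _ = (∑ v, G.degree v) * Fintype.card V ^ (k - 1) := by
      rw [Nat.card_prod, Nat.card_eq_fintype_card, dart_card_eq_sum_degrees, Nat.card_fun]
      simp

open Finset in
lemma sum_degree_sq_le (h4 : CycleFree G 4) :
    ∑ v, G.degree v ^ 2 ≤ 2 * Fintype.card V ^ 2 := by
  classical
  have hsq (v : V) : G.degree v ^ 2 = #{p : V × V | G.Adj v p.1 ∧ G.Adj v p.2} := by
    rw [← card_neighborFinset_eq_degree, sq, ← card_product, neighborFinset_eq_filter,
      ← filter_product, univ_product_univ]
  have hcommon (p : V × V) :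
      #{v | G.Adj v p.1 ∧ G.Adj v p.2} ≤ (if p.1 = p.2 then Fintype.card V else 0) + 1 := by
    split_ifs with hp
    · exact (card_le_univ _).trans (Nat.le_succ _)
    · refine (card_le_one.mpr fun a ha b hb => ?_).trans_eq (zero_add 1).symm
      simp only [mem_filter_univ] at ha hb
      exact h4.eq_of_adj_of_adj hp ha.1.symm ha.2.symm hb.1.symm hb.2.symm
  calc ∑ v, G.degree v ^ 2 = ∑ p : V × V, #{v | G.Adj v p.1 ∧ G.Adj v p.2} := by
        simp_rw [hsq]
        exact sum_card_bipartiteAbove_eq_sum_card_bipartiteBelow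
          fun v (p : V × V) => G.Adj v p.1 ∧ G.Adj v p.2
    _ ≤ ∑ p : V × V, ((if p.1 = p.2 then Fintype.card V else 0) + 1) :=
        sum_le_sum fun p _ => hcommon p
    _ = 2 * Fintype.card V ^ 2 := by
        rw [sum_add_distrib, Fintype.sum_prod_type]
        simp only [sum_ite_eq, mem_univ, ↓reduceIte, sum_const, card_univ, smul_eq_mul,
          Fintype.card_prod, mul_one]
        ring

lemma sq_sum_degree_le (h4 : CycleFree G 4) :
    (∑ v, G.degree v) ^ 2 ≤ 2 * Fintype.card V ^ 3 :=
  calc (∑ v, G.degree v) ^ 2 ≤ Fintype.card V * ∑ v, G.degree v ^ 2 := sq_sum_le_card_mul_sum_sq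
    _ ≤ Fintype.card V * (2 * Fintype.card V ^ 2) := Nat.mul_le_mul_left _ h4.sum_degree_sq_le
    _ = 2 * Fintype.card V ^ 3 := by ring

end CycleFree

lemma mul_pow_le_sqrt_two_mul_rpow {D x : ℝ} (hD : 0 ≤ D) (hx : 0 ≤ x) (h : D ^ 2 ≤ 2 * x ^ 3)
    {k : ℕ} (hk : 1 ≤ k) : D * x ^ (k - 1) ≤ √2 * x ^ ((k : ℝ) + 1 / 2) := by
  have hD' : D ≤ √2 * x ^ (3 / 2 : ℝ) :=
    calc D = √(D ^ 2) := (Real.sqrt_sq hD).symm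
      _ ≤ √(2 * x ^ 3) := Real.sqrt_le_sqrt h
      _ = √2 * x ^ (3 / 2 : ℝ) := by
        rw [Real.sqrt_mul zero_le_two, Real.sqrt_eq_rpow (x ^ 3), ← Real.rpow_natCast,
          ← Real.rpow_mul hx]
        norm_num
  have hsplit : x ^ ((k : ℝ) + 1 / 2) = x ^ (3 / 2 : ℝ) * x ^ (k - 1) := by
    rw [← Real.rpow_natCast, ← Real.rpow_add' hx (by positivity)]
    congr 1
    push_cast [Nat.cast_sub hk]
    ring
  rw [hsplit, ← mul_assoc]
  gcongr

lemma copyCount_eq_copyCount {α β : Type*} [Fintype β] (H : SimpleGraph α) (G : SimpleGraph β) :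
    _root_.copyCount H G = G.copyCount H := by
  classical
  rw [_root_.copyCount, SimpleGraph.copyCount, Nat.card_eq_fintype_card, Fintype.card_subtype]

theorem stmt18 (k : ℕ) (hk : 2 ≤ k) :
    ∃ c : ℝ, 0 < c ∧ ∀ (n : ℕ) (G : SimpleGraph (Fin n)),
      CycleFree G 4 →
      (_root_.copyCount (cycleGraph (2 * k + 1)) G : ℝ) ≤ c * (n : ℝ) ^ ((k : ℝ) + 1 / 2) := by
  refine ⟨√2, by positivity, fun n G h4 => ?_⟩
  classical
  have hcopies : _root_.copyCount (cycleGraph (2 * k + 1)) G ≤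
      (∑ v, G.degree v) * n ^ (k - 1) := by
    rw [copyCount_eq_copyCount]
    simpa only [Fintype.card_fin] using copyCount_le_labelledCopyCount.trans
      (h4.labelledCopyCount_oddCycleGraph_le (by omega))
  have hdegrees : ((∑ v, G.degree v : ℕ) : ℝ) ^ 2 ≤ 2 * (n : ℝ) ^ 3 := by
    exact_mod_cast (by simpa only [Fintype.card_fin] using h4.sq_sum_degree_le)
  calc (_root_.copyCount (cycleGraph (2 * k + 1)) G : ℝ)
      ≤ (∑ v, G.degree v : ℕ) * (n : ℝ) ^ (k - 1) := by exact_mod_cast hcopies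
    _ ≤ √2 * (n : ℝ) ^ ((k : ℝ) + 1 / 2) :=
      mul_pow_le_sqrt_two_mul_rpow (by positivity) (by positivity) hdegrees (by omega)
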